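/- Under the same setup as the subsequence convergence theorem — X ∈ ℝ^{n×d}, L ∈ ℝ^{n×n} symmetric positive semidefinite, μ > 0 with Xᵀ L X ≠ 0, β > 0, f(W,H) = (1/2)‖X − X W H‖_F² + (μ/2)Tr(Wᵀ Xᵀ L X W), g_β(W) = β·Σ_i ‖W_{i·}‖₂, and sequences (W^k, H^k) with W^k ≥ 0 satisfying, for all k: W^{k+1} minimizes over W ≥ 0 the map W ↦ Tr(G_kᵀ(W − W^k)) + (L_w^k/2)‖W − W^k‖_F² + g_β(W) with G_k = Xᵀ(X W^k H^k − X)(H^k)ᵀ + μ Xᵀ L X W^k and L_w^k = ‖H^k(H^k)ᵀ‖₂‖XᵀX‖₂ + μ‖Xᵀ L X‖₂, and H^{k+1} minimizes H ↦ f(W^{k+1}, H) — the following hold: (a) Σ_{k=0}^∞ [ (L_μ/2)‖W^{k+1} − W^k‖_F² + (1/2)‖X W^{k+1} H^k − X W^{k+1} H^{k+1}‖_F² ] ≤ f(W⁰,H⁰) + g_β(W⁰), where L_μ = μ‖Xᵀ L X‖₂ > 0; (b) W^{k+1} − W^k → 0 as k → ∞; and (c) (X W^k)ᵀ(X W^k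 H^k − X) → 0 as k → ∞. -/

import Mathlib

open scoped BigOperators
open Matrix Filter Topology

/-- Squared Frobenius norm of a matrix. -/
noncomputable def frobSq {m p : Type*} [Fintype m] [Fintype p]
    (A : Matrix m p ℝ) : ℝ :=
  ∑ i, ∑ j, (A i j) ^ 2

/-- Frobenius norm of a matrix. -/
noncomputable def frobNorm {m p : Type*} [Fintype m] [Fintype p]
    (A : Matrix m p ℝ) : ℝ :=
  Real.sqrt (frobSq A)

/-- Spectral norm (largest singular value) of a matrix: its operator norm as a
linear map between Euclidean spaces. -/
noncomputable def specNorm {m p : ℕ} (A : Matrix (Fin m) (Fin p) ℝ) : ℝ :=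
  ‖LinearMap.toContinuousLinearMap (Matrix.toEuclideanLin A)‖

/-- The smooth part of the GLoSS objective:
`f(W,H) = (1/2)‖X − XWH‖_F² + (μ/2)Tr(WᵀXᵀLXW)`. -/
noncomputable def fobj {n d K : ℕ} (X : Matrix (Fin n) (Fin d) ℝ)
    (L : Matrix (Fin n) (Fin n) ℝ) (μ : ℝ)
    (W : Matrix (Fin d) (Fin K) ℝ) (H : Matrix (Fin K) (Fin d) ℝ) : ℝ :=
  (1 / 2) * frobSq (X - X * W * H) + (μ / 2) * Matrix.trace (Wᵀ * Xᵀ * L * X * W)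

/-- The group-lasso regularizer `g_β(W) = β Σᵢ ‖Wᵢ·‖₂` (sum of Euclidean norms of rows). -/
noncomputable def gbeta {d K : ℕ} (β : ℝ) (W : Matrix (Fin d) (Fin K) ℝ) : ℝ :=
  β * ∑ i, Real.sqrt (∑ j, (W i j) ^ 2)

/-- The partial gradient `∇_W f(W,H) = Xᵀ(XWH − X)Hᵀ + μXᵀLXW`. -/
noncomputable def Gmat {n d K : ℕ} (X : Matrix (Fin n) (Fin d) ℝ)
    (L : Matrix (Fin n) (Fin n) ℝ) (μ : ℝ)
    (W : Matrix (Fin d) (Fin K) ℝ) (H : Matrix (Fin K) (Fin d) ℝ) :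
    Matrix (Fin d) (Fin K) ℝ :=
  Xᵀ * (X * W * H - X) * Hᵀ + μ • (Xᵀ * L * X * W)

/-- The Lipschitz constant `L_w = ‖HHᵀ‖₂‖XᵀX‖₂ + μ‖XᵀLX‖₂`. -/
noncomputable def Lw {n d K : ℕ} (X : Matrix (Fin n) (Fin d) ℝ)
    (L : Matrix (Fin n) (Fin n) ℝ) (μ : ℝ) (H : Matrix (Fin K) (Fin d) ℝ) : ℝ :=
  specNorm (H * Hᵀ) * specNorm (Xᵀ * X) + μ * specNorm (Xᵀ * L * X)

/-- The prox-linearized surrogate minimized at each `W`-update: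
`W' ↦ ⟨∇_W f(Wk,Hk), W' − Wk⟩ + (L_w/2)‖W' − Wk‖_F² + g_β(W')`. -/
noncomputable def Qsurr {n d K : ℕ} (X : Matrix (Fin n) (Fin d) ℝ)
    (L : Matrix (Fin n) (Fin n) ℝ) (μ β : ℝ)
    (Wk : Matrix (Fin d) (Fin K) ℝ) (Hk : Matrix (Fin K) (Fin d) ℝ)
    (W' : Matrix (Fin d) (Fin K) ℝ) : ℝ :=
  Matrix.trace ((Gmat X L μ Wk Hk)ᵀ * (W' - Wk)) +
    (Lw X L μ Hk / 2) * frobSq (W' - Wk) + gbeta β W'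

/-!
The gradient of `f(·, H)` is `L_w`-Lipschitz, so the descent lemma, combined with the three-point
inequality of the prox-linear `W`-step (the surrogate is a convex `g_β` plus an `L_w/2`-quadratic,
minimized over a convex set), lowers `f + g_β` by at least `(L_w/2)‖ΔW‖² ≥ (L_μ/2)‖ΔW‖²`. The
exact `H`-step satisfies the normal equations `(XW)ᵀ(XWH − X) = 0`, which make it lower `f` by
exactly `½‖XW(Hᵏ − Hᵏ⁺¹)‖²`. Telescoping against `f + g_β ≥ 0` gives (a), summability gives (b),
and (c) holds identically from `k = 1` on by the normal equations.
-/

open Set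

section Frobenius

variable {m p q : Type*} [Fintype m] [Fintype p] [Fintype q]

lemma frobSq_eq_trace (A : Matrix m p ℝ) : frobSq A = (Aᵀ * A).trace := by
  rw [← vec_dotProduct_vec]
  simp only [frobSq, sq, dotProduct, vec, Fintype.sum_prod_type]
  exact Finset.sum_comm

lemma frobSq_nonneg (A : Matrix m p ℝ) : 0 ≤ frobSq A := by
  unfold frobSq; positivity

lemma frobSq_eq_zero_iff {A : Matrix m p ℝ} : frobSq A = 0 ↔ A = 0 := by
  simp only [frobSq]
  rw [Finset.sum_eq_zero_iff_of_nonneg fun _ _ => by positivity]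
  simp_rw [Finset.sum_eq_zero_iff_of_nonneg fun _ _ => sq_nonneg _]
  simp [← Matrix.ext_iff]

lemma frobSq_transpose (A : Matrix m p ℝ) : frobSq Aᵀ = frobSq A := Finset.sum_comm

lemma frobSq_smul (t : ℝ) (A : Matrix m p ℝ) : frobSq (t • A) = t ^ 2 * frobSq A := by
  simp [frobSq, mul_pow, Finset.mul_sum]

lemma trace_transpose_mul_comm (A B : Matrix m p ℝ) : (Aᵀ * B).trace = (Bᵀ * A).trace := by
  rw [← trace_transpose, transpose_mul, transpose_transpose]

lemma frobSq_sub (A B : Matrix m p ℝ) :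
    frobSq (A - B) = frobSq A - 2 * (Aᵀ * B).trace + frobSq B := by
  simp only [frobSq_eq_trace, transpose_sub, Matrix.sub_mul, Matrix.mul_sub, trace_sub]
  rw [trace_transpose_mul_comm B A]
  ring

lemma trace_transpose_add_mul_mul_add {M : Matrix m m ℝ} (hM : M.IsSymm) (W Δ : Matrix m p ℝ) :
    ((W + Δ)ᵀ * M * (W + Δ)).trace =
      (Wᵀ * M * W).trace + 2 * ((M * W)ᵀ * Δ).trace + (Δᵀ * M * Δ).trace := by
  have hWΔ : (Wᵀ * M * Δ).trace = ((M * W)ᵀ * Δ).trace := by rw [transpose_mul, hM.eq]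
  have hΔW : (Δᵀ * M * W).trace = ((M * W)ᵀ * Δ).trace := by
    rw [Matrix.mul_assoc, trace_transpose_mul_comm]
  simp only [transpose_add, Matrix.add_mul, Matrix.mul_add, trace_add, hWΔ, hΔW]
  ring

lemma tendsto_zero_of_frobSq {ι : Type*} {l : Filter ι} {A : ι → Matrix m p ℝ}
    (h : Tendsto (fun k => frobSq (A k)) l (𝓝 0)) : Tendsto A l (𝓝 0) := by
  -- Mathlib's Frobenius norm is built over the product topology, so it detects `𝓝 0` here
  let _ := Matrix.frobeniusNormedAddCommGroup (m := m) (n := p) (α := ℝ)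
  have hnorm : ∀ k, ‖A k‖ = √(frobSq (A k)) := fun k => by
    rw [Matrix.frobenius_norm_def, Real.sqrt_eq_rpow, frobSq]
    simp
  refine tendsto_zero_iff_norm_tendsto_zero.mpr ?_
  simpa [hnorm] using h.sqrt

lemma frobSq_sub_mul (A : Matrix m p ℝ) (B : Matrix m q ℝ) (H₀ H : Matrix p q ℝ) :
    frobSq (B - A * H) =
      frobSq (B - A * H₀) + 2 * ((Aᵀ * (A * H₀ - B))ᵀ * (H - H₀)).trace +
        frobSq (A * H - A * H₀) := by
  have hcross : ((B - A * H₀)ᵀ * (A * H - A * H₀)).trace =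
      -((Aᵀ * (A * H₀ - B))ᵀ * (H - H₀)).trace := by
    rw [← Matrix.mul_sub, transpose_mul, transpose_transpose, ← Matrix.mul_assoc, ← trace_neg,
      ← Matrix.neg_mul, ← Matrix.neg_mul, ← transpose_neg, neg_sub]
  rw [show B - A * H = (B - A * H₀) - (A * H - A * H₀) by abel, frobSq_sub, hcross]
  ring

lemma transpose_mul_sub_eq_zero_of_forall_frobSq_le {A : Matrix m p ℝ} {B : Matrix m q ℝ}
    {H₀ : Matrix p q ℝ}
    (hmin : ∀ H : Matrix p q ℝ, frobSq (B - A * H₀) ≤ frobSq (B - A * H)) :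
    Aᵀ * (A * H₀ - B) = 0 := by
  set G := Aᵀ * (A * H₀ - B)
  -- along `H₀ - t • G` the excess residual is `t²‖AG‖² - 2t‖G‖²`; it stays `≥ 0` only if `G = 0`
  have hquad : ∀ t : ℝ, 0 ≤ frobSq (A * G) * (t * t) + (-2 * frobSq G) * t + 0 := fun t => by
    have h := hmin (H₀ - t • G)
    rw [frobSq_sub_mul A B H₀ (H₀ - t • G), ← Matrix.mul_sub,
      show H₀ - t • G - H₀ = (-t) • G by simp] at h
    simp only [Matrix.mul_smul, frobSq_smul, trace_smul, smul_eq_mul] at h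
    rw [show (Aᵀ * (A * H₀ - B))ᵀ * G = Gᵀ * G from rfl, ← frobSq_eq_trace] at h
    linear_combination h
  have hdisc := discrim_le_zero hquad
  rw [discrim] at hdisc
  exact frobSq_eq_zero_iff.mp (by nlinarith)

lemma frobSq_sub_mul_eq_of_transpose_mul_sub_eq_zero {A : Matrix m p ℝ} {B : Matrix m q ℝ}
    {H₀ : Matrix p q ℝ} (hG : Aᵀ * (A * H₀ - B) = 0) (H : Matrix p q ℝ) :
    frobSq (B - A * H) = frobSq (B - A * H₀) + frobSq (A * H - A * H₀) := by
  simp [frobSq_sub_mul A B H₀ H, hG]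

end Frobenius

section Spectral

variable {n p q : ℕ}

lemma specNorm_nonneg (A : Matrix (Fin p) (Fin q) ℝ) : 0 ≤ specNorm A := norm_nonneg _

lemma specNorm_pos {A : Matrix (Fin p) (Fin q) ℝ} (hA : A ≠ 0) : 0 < specNorm A :=
  norm_pos_iff.mpr ((LinearEquiv.map_ne_zero_iff _).mpr ((LinearEquiv.map_ne_zero_iff _).mpr hA))

lemma dotProduct_mulVec_le_specNorm (M : Matrix (Fin p) (Fin p) ℝ) (v : Fin p → ℝ) :
    v ⬝ᵥ (M *ᵥ v) ≤ specNorm M * (v ⬝ᵥ v) := by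
  set T := LinearMap.toContinuousLinearMap (Matrix.toEuclideanLin M)
  set x := WithLp.toLp 2 v
  have hvMv : v ⬝ᵥ (M *ᵥ v) = inner ℝ x (T x) := by
    simp [T, x, EuclideanSpace.inner_toLp_toLp, dotProduct_comm]
  have hvv : v ⬝ᵥ v = ‖x‖ ^ 2 := by
    rw [EuclideanSpace.real_norm_sq_eq]; simp [x, dotProduct, sq]
  rw [hvMv, hvv, specNorm]
  calc inner ℝ x (T x) ≤ ‖x‖ * ‖T x‖ := real_inner_le_norm _ _
    _ ≤ ‖x‖ * (‖T‖ * ‖x‖) := by gcongr; exact T.le_opNorm x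
    _ = ‖T‖ * ‖x‖ ^ 2 := by ring

lemma trace_transpose_mul_mul_le (M : Matrix (Fin p) (Fin p) ℝ) (D : Matrix (Fin p) (Fin q) ℝ) :
    (Dᵀ * M * D).trace ≤ specNorm M * frobSq D := by
  have hcol : ∀ N : Matrix (Fin p) (Fin p) ℝ,
      (Dᵀ * N * D).trace = ∑ j, (fun i => D i j) ⬝ᵥ (N *ᵥ fun i => D i j) := by
    intro N
    simp only [Matrix.trace, diag, Matrix.mul_apply, mulVec, dotProduct, transpose_apply,
      Finset.sum_mul, Finset.mul_sum, mul_assoc]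
    exact Finset.sum_congr rfl fun _ _ => Finset.sum_comm
  rw [hcol, frobSq_eq_trace, ← Matrix.mul_one Dᵀ, hcol, Finset.mul_sum]
  refine Finset.sum_le_sum fun j _ => ?_
  simpa using dotProduct_mulVec_le_specNorm M _

lemma frobSq_mul_le_left (A : Matrix (Fin n) (Fin p) ℝ) (D : Matrix (Fin p) (Fin q) ℝ) :
    frobSq (A * D) ≤ specNorm (Aᵀ * A) * frobSq D := by
  rw [frobSq_eq_trace, show (A * D)ᵀ * (A * D) = Dᵀ * (Aᵀ * A) * D by
    simp only [transpose_mul, Matrix.mul_assoc]]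
  exact trace_transpose_mul_mul_le _ _

lemma frobSq_mul_le_right (D : Matrix (Fin n) (Fin p) ℝ) (B : Matrix (Fin p) (Fin q) ℝ) :
    frobSq (D * B) ≤ specNorm (B * Bᵀ) * frobSq D := by
  have h := frobSq_mul_le_left Bᵀ Dᵀ
  rwa [transpose_transpose, frobSq_transpose, ← transpose_mul, frobSq_transpose] at h

end Spectral

theorem ConvexOn.prox_three_point {E : Type*} [AddCommGroup E] [Module ℝ E] {s : Set E}
    {g : E → ℝ} (hg : ConvexOn ℝ s g) (ℓ : E →ₗ[ℝ] ℝ) {q : E → ℝ}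
    (hq : ∀ (t : ℝ) (v : E), q (t • v) = t ^ 2 * q v) {x y : E} (hx : x ∈ s) (hy : y ∈ s)
    (hmin : ∀ z ∈ s, ℓ (y - x) + q (y - x) + g y ≤ ℓ (z - x) + q (z - x) + g z) :
    ℓ (y - x) + 2 * q (y - x) + g y ≤ g x := by
  have hθ : ∀ θ ∈ Ioo (0 : ℝ) 1, ℓ (y - x) + (2 - θ) * q (y - x) + g y ≤ g x := by
    rintro θ ⟨hθ0, hθ1⟩
    have hzx : ((1 - θ) • y + θ • x) - x = (1 - θ) • (y - x) := by
      simp only [smul_sub, sub_smul, one_smul]; abel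
    have hθ' : (0 : ℝ) ≤ 1 - θ := by linarith
    have hgz := hg.2 hy hx hθ' hθ0.le (sub_add_cancel 1 θ)
    have h := hmin _ (hg.1 hy hx hθ' hθ0.le (sub_add_cancel 1 θ))
    rw [hzx, map_smul, hq, smul_eq_mul] at h
    simp only [smul_eq_mul] at hgz
    have hscaled : θ * (ℓ (y - x) + (2 - θ) * q (y - x) + g y - g x) ≤ 0 := by linarith
    linarith [nonpos_of_mul_nonpos_right hscaled hθ0]
  have hlim : Tendsto (fun θ : ℝ => ℓ (y - x) + (2 - θ) * q (y - x) + g y) (𝓝[>] 0)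
      (𝓝 (ℓ (y - x) + 2 * q (y - x) + g y)) := by
    refine tendsto_nhdsWithin_of_tendsto_nhds ?_
    have : Continuous fun θ : ℝ => ℓ (y - x) + (2 - θ) * q (y - x) + g y := by fun_prop
    simpa using this.tendsto 0
  exact le_of_tendsto hlim (Filter.mem_of_superset (Ioo_mem_nhdsGT one_pos) hθ)

lemma convex_setOf_forall_nonneg {m p : Type*} :
    Convex ℝ {V : Matrix m p ℝ | ∀ i j, 0 ≤ V i j} := by
  intro V hV V' hV' a b ha hb _ i j
  have := hV i j
  have := hV' i j
  simp only [Matrix.add_apply, Matrix.smul_apply, smul_eq_mul]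
  positivity

section GroupLasso

variable {d K : ℕ} {β : ℝ}

lemma gbeta_eq_sum_norm (β : ℝ) (W : Matrix (Fin d) (Fin K) ℝ) :
    gbeta β W = β * ∑ i, ‖WithLp.toLp 2 (W i)‖ := by
  simp [gbeta, EuclideanSpace.norm_eq]

lemma gbeta_nonneg (hβ : 0 ≤ β) (W : Matrix (Fin d) (Fin K) ℝ) : 0 ≤ gbeta β W := by
  unfold gbeta; positivity

lemma convexOn_gbeta (hβ : 0 ≤ β) :
    ConvexOn ℝ univ (gbeta β : Matrix (Fin d) (Fin K) ℝ → ℝ) := by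
  refine ⟨convex_univ, fun A _ B _ a b ha hb _ => ?_⟩
  have hrow : ∀ i, ‖WithLp.toLp 2 ((a • A + b • B) i)‖ ≤
      a * ‖WithLp.toLp 2 (A i)‖ + b * ‖WithLp.toLp 2 (B i)‖ := fun i => by
    calc ‖WithLp.toLp 2 ((a • A + b • B) i)‖
        = ‖a • WithLp.toLp 2 (A i) + b • WithLp.toLp 2 (B i)‖ := rfl
      _ ≤ ‖a • WithLp.toLp 2 (A i)‖ + ‖b • WithLp.toLp 2 (B i)‖ := norm_add_le _ _
      _ = _ := by rw [norm_smul, norm_smul, Real.norm_of_nonneg ha, Real.norm_of_nonneg hb]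
  simp only [gbeta_eq_sum_norm, smul_eq_mul]
  calc β * ∑ i, ‖WithLp.toLp 2 ((a • A + b • B) i)‖
      ≤ β * ∑ i, (a * ‖WithLp.toLp 2 (A i)‖ + b * ‖WithLp.toLp 2 (B i)‖) := by
        gcongr with i; exact hrow i
    _ = _ := by rw [Finset.sum_add_distrib, ← Finset.mul_sum, ← Finset.mul_sum]; ring

end GroupLasso

section Gloss

variable {n d K : ℕ} (X : Matrix (Fin n) (Fin d) ℝ) {L : Matrix (Fin n) (Fin n) ℝ} {μ : ℝ}

lemma fobj_nonneg (hL : L.PosSemidef) (hμ : 0 ≤ μ) (W : Matrix (Fin d) (Fin K) ℝ)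
    (H : Matrix (Fin K) (Fin d) ℝ) : 0 ≤ fobj X L μ W H := by
  have htr : 0 ≤ (Wᵀ * Xᵀ * L * X * W).trace := by
    simpa [conjTranspose_eq_transpose_of_trivial, transpose_mul, Matrix.mul_assoc] using
      (hL.conjTranspose_mul_mul_same (X * W)).trace_nonneg
  unfold fobj
  have := frobSq_nonneg (X - X * W * H)
  positivity

lemma fobj_add_eq (hL : L.IsSymm) (W Δ : Matrix (Fin d) (Fin K) ℝ)
    (H : Matrix (Fin K) (Fin d) ℝ) :
    fobj X L μ (W + Δ) H = fobj X L μ W H + ((Gmat X L μ W H)ᵀ * Δ).trace +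
      1 / 2 * frobSq (X * Δ * H) + μ / 2 * (Δᵀ * (Xᵀ * L * X) * Δ).trace := by
  have hM : (Xᵀ * L * X).IsSymm := by
    simp only [IsSymm, transpose_mul, transpose_transpose, hL.eq, Matrix.mul_assoc]
  have hres : X - X * (W + Δ) * H = (X - X * W * H) - X * Δ * H := by
    rw [Matrix.mul_add, Matrix.add_mul]; abel
  have hcross : ((X - X * W * H)ᵀ * (X * Δ * H)).trace =
      -((Xᵀ * (X * W * H - X) * Hᵀ)ᵀ * Δ).trace := by
    rw [← trace_neg, ← Matrix.neg_mul, ← transpose_neg, ← Matrix.neg_mul, ← Matrix.mul_neg,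
      neg_sub]
    simp only [transpose_mul, transpose_transpose, Matrix.mul_assoc]
    rw [trace_mul_comm H]
    simp only [Matrix.mul_assoc]
  have hquad : ∀ V : Matrix (Fin d) (Fin K) ℝ,
      Vᵀ * Xᵀ * L * X * V = Vᵀ * (Xᵀ * L * X) * V := by
    simp only [Matrix.mul_assoc, implies_true]
  unfold fobj Gmat
  rw [hres, frobSq_sub, hcross, hquad, hquad, trace_transpose_add_mul_mul_add hM, transpose_add,
    Matrix.add_mul, trace_add, transpose_smul, Matrix.smul_mul, trace_smul, smul_eq_mul]
  ring

lemma fobj_add_le (hL : L.IsSymm) (hμ : 0 ≤ μ) (W Δ : Matrix (Fin d) (Fin K) ℝ)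
    (H : Matrix (Fin K) (Fin d) ℝ) :
    fobj X L μ (W + Δ) H ≤
      fobj X L μ W H + ((Gmat X L μ W H)ᵀ * Δ).trace + Lw X L μ H / 2 * frobSq Δ := by
  have hXΔH : frobSq (X * Δ * H) ≤ specNorm (H * Hᵀ) * specNorm (Xᵀ * X) * frobSq Δ :=
    calc frobSq (X * Δ * H) ≤ specNorm (H * Hᵀ) * frobSq (X * Δ) := frobSq_mul_le_right _ _
      _ ≤ specNorm (H * Hᵀ) * (specNorm (Xᵀ * X) * frobSq Δ) :=
        mul_le_mul_of_nonneg_left (frobSq_mul_le_left _ _) (specNorm_nonneg _)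
      _ = _ := by ring
  have hΔMΔ := mul_le_mul_of_nonneg_left (trace_transpose_mul_mul_le (Xᵀ * L * X) Δ) hμ
  rw [fobj_add_eq X hL, Lw]
  linarith

variable {β : ℝ}

lemma fobj_add_gbeta_le_of_prox (hL : L.IsSymm) (hμ : 0 ≤ μ) (hβ : 0 ≤ β)
    {W W' : Matrix (Fin d) (Fin K) ℝ} {H : Matrix (Fin K) (Fin d) ℝ}
    (hW : ∀ i j, 0 ≤ W i j) (hW' : ∀ i j, 0 ≤ W' i j)
    (hmin : ∀ V : Matrix (Fin d) (Fin K) ℝ, (∀ i j, 0 ≤ V i j) →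
      Qsurr X L μ β W H W' ≤ Qsurr X L μ β W H V) :
    fobj X L μ W' H + gbeta β W' + Lw X L μ H / 2 * frobSq (W' - W) ≤
      fobj X L μ W H + gbeta β W := by
  have hprox :=
    ((convexOn_gbeta hβ).subset (subset_univ _) convex_setOf_forall_nonneg).prox_three_point
      (traceLinearMap (Fin K) ℝ ℝ ∘ₗ mulLeftLinearMap (Fin K) ℝ (Gmat X L μ W H)ᵀ)
      (q := fun V => Lw X L μ H / 2 * frobSq V) (fun t V => by simp only [frobSq_smul]; ring)
      hW hW' hmin
  simp only [LinearMap.coe_comp, Function.comp_apply, mulLeftLinearMap_apply,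
    traceLinearMap_apply] at hprox
  have hdescent := fobj_add_le X hL hμ W (W' - W) H
  rw [add_sub_cancel] at hdescent
  linarith

lemma transpose_mul_sub_eq_zero_of_fobj_le (W : Matrix (Fin d) (Fin K) ℝ)
    {H₀ : Matrix (Fin K) (Fin d) ℝ} (hmin : ∀ H, fobj X L μ W H₀ ≤ fobj X L μ W H) :
    (X * W)ᵀ * (X * W * H₀ - X) = 0 :=
  transpose_mul_sub_eq_zero_of_forall_frobSq_le fun H => by
    have := hmin H; unfold fobj at this; linarith

lemma fobj_eq_add_of_transpose_mul_sub_eq_zero {W : Matrix (Fin d) (Fin K) ℝ}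
    {H₀ : Matrix (Fin K) (Fin d) ℝ} (hG : (X * W)ᵀ * (X * W * H₀ - X) = 0)
    (H : Matrix (Fin K) (Fin d) ℝ) :
    fobj X L μ W H = fobj X L μ W H₀ + 1 / 2 * frobSq (X * W * H - X * W * H₀) := by
  unfold fobj
  rw [frobSq_sub_mul_eq_of_transpose_mul_sub_eq_zero hG]
  ring

lemma fobj_add_gbeta_sufficient_decrease (hL : L.IsSymm) (hμ : 0 ≤ μ) (hβ : 0 ≤ β)
    {W W' : Matrix (Fin d) (Fin K) ℝ} {H H' : Matrix (Fin K) (Fin d) ℝ}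
    (hW : ∀ i j, 0 ≤ W i j) (hW' : ∀ i j, 0 ≤ W' i j)
    (hWmin : ∀ V : Matrix (Fin d) (Fin K) ℝ, (∀ i j, 0 ≤ V i j) →
      Qsurr X L μ β W H W' ≤ Qsurr X L μ β W H V)
    (hHmin : ∀ V, fobj X L μ W' H' ≤ fobj X L μ W' V) :
    μ * specNorm (Xᵀ * L * X) / 2 * frobSq (W' - W) + 1 / 2 * frobSq (X * W' * H - X * W' * H') +
      (fobj X L μ W' H' + gbeta β W') ≤ fobj X L μ W H + gbeta β W := by
  have hWstep := fobj_add_gbeta_le_of_prox X hL hμ hβ hW hW' hWmin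
  have hHstep := fobj_eq_add_of_transpose_mul_sub_eq_zero (L := L) (μ := μ) X
    (transpose_mul_sub_eq_zero_of_fobj_le X W' hHmin) H
  have hLw : μ * specNorm (Xᵀ * L * X) ≤ Lw X L μ H :=
    le_add_of_nonneg_left (mul_nonneg (specNorm_nonneg _) (specNorm_nonneg _))
  linarith [mul_le_mul_of_nonneg_right hLw (frobSq_nonneg (W' - W))]

end Gloss

lemma sum_range_add_le_of_forall_add_le {a F : ℕ → ℝ} (h : ∀ k, a k + F (k + 1) ≤ F k)
    (N : ℕ) :
    ∑ k ∈ Finset.range N, a k + F N ≤ F 0 := by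
  induction N with
  | zero => simp
  | succ N ih => rw [Finset.sum_range_succ]; linarith [h N]

lemma tendsto_zero_of_sum_range_mul_add_le {u v : ℕ → ℝ} {c C : ℝ} (hc : 0 < c)
    (hu : ∀ k, 0 ≤ u k) (hv : ∀ k, 0 ≤ v k)
    (h : ∀ N, ∑ k ∈ Finset.range N, (c * u k + v k) ≤ C) :
    Tendsto u atTop (𝓝 0) := by
  have hlim := (summable_of_sum_range_le (fun k => by have := hu k; have := hv k; positivity)
    h).tendsto_atTop_zero
  refine squeeze_zero hu (fun k => ?_) (by simpa using hlim.div_const c)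
  rw [le_div_iff₀ hc]
  linarith [hv k]

/-- along the GLoSS block coordinate descent iterations (without
extrapolation), with `L_μ = μ‖XᵀLX‖₂ > 0`:
(a) `Σ_k [(L_μ/2)‖W^{k+1} − W^k‖_F² + (1/2)‖XW^{k+1}H^k − XW^{k+1}H^{k+1}‖_F²]
    ≤ f(W⁰,H⁰) + g_β(W⁰)` (all partial sums of the nonnegative series are so bounded);
(b) `W^{k+1} − W^k → 0`; and (c) `(XW^k)ᵀ(XW^kH^k − X) → 0`. -/
theorem gloss_summability_and_limits (n d K : ℕ)
    (X : Matrix (Fin n) (Fin d) ℝ) (L : Matrix (Fin n) (Fin n) ℝ)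
    (hL : L.PosSemidef) (μ : ℝ) (hμ : 0 < μ) (hXLX : Xᵀ * L * X ≠ 0)
    (β : ℝ) (hβ : 0 < β)
    (W : ℕ → Matrix (Fin d) (Fin K) ℝ) (H : ℕ → Matrix (Fin K) (Fin d) ℝ)
    (hWnn : ∀ k, ∀ i j, 0 ≤ W k i j)
    (hWmin : ∀ k, ∀ W' : Matrix (Fin d) (Fin K) ℝ, (∀ i j, 0 ≤ W' i j) →
      Qsurr X L μ β (W k) (H k) (W (k + 1)) ≤ Qsurr X L μ β (W k) (H k) W')
    (hHmin : ∀ k, ∀ H' : Matrix (Fin K) (Fin d) ℝ,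
      fobj X L μ (W (k + 1)) (H (k + 1)) ≤ fobj X L μ (W (k + 1)) H')
    (Lmu : ℝ) (hLmu : Lmu = μ * specNorm (Xᵀ * L * X)) :
    0 < Lmu ∧
    (∀ N : ℕ, ∑ k ∈ Finset.range N,
        ((Lmu / 2) * frobSq (W (k + 1) - W k) +
          (1 / 2) * frobSq (X * W (k + 1) * H k - X * W (k + 1) * H (k + 1))) ≤
      fobj X L μ (W 0) (H 0) + gbeta β (W 0)) ∧
    Tendsto (fun k => W (k + 1) - W k) atTop (𝓝 0) ∧
    Tendsto (fun k => (X * W k)ᵀ * (X * W k * H k - X)) atTop (𝓝 0) := by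
  subst hLmu
  have hLsymm : L.IsSymm := isHermitian_iff_isSymm.mp hL.isHermitian
  have hnormal : ∀ k, (X * W (k + 1))ᵀ * (X * W (k + 1) * H (k + 1) - X) = 0 := fun k =>
    transpose_mul_sub_eq_zero_of_fobj_le X _ (hHmin k)
  set F : ℕ → ℝ := fun k => fobj X L μ (W k) (H k) + gbeta β (W k)
  set a : ℕ → ℝ := fun k => μ * specNorm (Xᵀ * L * X) / 2 * frobSq (W (k + 1) - W k) +
    1 / 2 * frobSq (X * W (k + 1) * H k - X * W (k + 1) * H (k + 1))
  have hstep : ∀ k, a k + F (k + 1) ≤ F k := fun k =>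
    fobj_add_gbeta_sufficient_decrease X hLsymm hμ.le hβ.le (hWnn k) (hWnn (k + 1)) (hWmin k)
      (hHmin k)
  have hsum : ∀ N, ∑ k ∈ Finset.range N, a k ≤ F 0 := fun N => by
    linarith [sum_range_add_le_of_forall_add_le hstep N,
      fobj_nonneg X hL hμ.le (W N) (H N), gbeta_nonneg hβ.le (W N)]
  have hLmu_pos : 0 < μ * specNorm (Xᵀ * L * X) := mul_pos hμ (specNorm_pos hXLX)
  refine ⟨hLmu_pos, hsum, tendsto_zero_of_frobSq ?_, ?_⟩
  · exact tendsto_zero_of_sum_range_mul_add_le (half_pos hLmu_pos) (fun _ => frobSq_nonneg _)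
      (fun _ => mul_nonneg (by norm_num) (frobSq_nonneg _)) hsum
  · refine tendsto_const_nhds.congr' (eventually_atTop.mpr ⟨1, fun k hk => ?_⟩)
    obtain ⟨k, rfl⟩ := Nat.exists_eq_add_of_le' hk
    exact (hnormal k).symm
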